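/- arXiv:1810.03440 — 4 statements merged into one kernel-verified Lean document; each statement's English description precedes it below -/
import Mathlib

section
/- Complete detectability of the pair [A(h), H]: let h > 0, let Λ ∈ ℝ^{d×d} be invertible, and let H = Ċ − ΛC = [−Λ, I_d, 0, …, 0] ∈ ℝ^{d×(q+1)d}. If a vector w ∈ ℝ^{(q+1)d} satisfies A(h)w = ηw for some scalar η and Hw = 0, then w = 0. -/
open Matrix
open scoped Kronecker

/-- Entries of the one-dimensional discretised IWP(q) transition matrix `A⁽¹⁾(h)`. -/
noncomputable def Aone (q : ℕ) (h : ℝ) : Matrix (Fin (q + 1)) (Fin (q + 1)) ℝ :=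
  Matrix.of fun i j =>
    if i ≤ j then h ^ (j.val - i.val) / Nat.factorial (j.val - i.val) else 0

/-- The discretised IWP(q) transition matrix `A(h) = A⁽¹⁾(h) ⊗ I_d`. -/
noncomputable def Amat (q d : ℕ) (h : ℝ) :
    Matrix (Fin (q + 1) × Fin d) (Fin (q + 1) × Fin d) ℝ :=
  Aone q h ⊗ₖ (1 : Matrix (Fin d) (Fin d) ℝ)

/-- `C = [I_d, 0, …, 0]`, extracting the first `d`-dimensional sub-vector. -/
def Cmat (q d : ℕ) : Matrix (Fin d) (Fin (q + 1) × Fin d) ℝ :=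
  Matrix.of fun k p => if p.1 = 0 ∧ p.2 = k then 1 else 0

/-- `Ċ = [0, I_d, 0, …, 0]`, extracting the second `d`-dimensional sub-vector. -/
def Cdot (q d : ℕ) : Matrix (Fin d) (Fin (q + 1) × Fin d) ℝ :=
  Matrix.of fun k p => if p.1.val = 1 ∧ p.2 = k then 1 else 0

/-! `A⁽¹⁾(h)` is upper triangular with unit diagonal and superdiagonal `h ≠ 0`. If `v` is an
eigenvector and `m > 0` its last nonzero coordinate, row `m` forces `η = 1`, and then row `m - 1`
reads `h v_m = 0`, a contradiction; so every eigenvector of `A(h)` lives in the first block.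
There `Hw = 0` becomes `Λ w₀ = 0`, and invertibility of `Λ` gives `w₀ = 0`. -/

lemma Matrix.BlockTriangular.mulVec_apply_eq_sum_Icc {R ι : Type*} [Semiring R] [Fintype ι]
    [LinearOrder ι] [LocallyFiniteOrder ι] {U : Matrix ι ι R} (hU : U.BlockTriangular id)
    {v : ι → R} {j : ι} (hv : ∀ k, j < k → v k = 0) (i : ι) :
    (U *ᵥ v) i = ∑ k ∈ Finset.Icc i j, U i k * v k := by
  refine (Finset.sum_subset (Finset.subset_univ _) fun k _ hk => ?_).symm
  rcases lt_or_ge k i with hki | hik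
  · simp [hU hki]
  · simp [hv k (lt_of_not_ge fun hkj => hk (Finset.mem_Icc.2 ⟨hik, hkj⟩))]

theorem Matrix.BlockTriangular.eigenvector_eq_zero_of_ne_zero {K : Type*} [Field K] {n : ℕ}
    {U : Matrix (Fin (n + 1)) (Fin (n + 1)) K} (hU : U.BlockTriangular id) {c : K}
    (hdiag : ∀ i, U i i = c) (hsuper : ∀ i : Fin n, U i.castSucc i.succ ≠ 0)
    {v : Fin (n + 1) → K} {η : K} (hv : U *ᵥ v = η • v) {j : Fin (n + 1)} (hj : j ≠ 0) :
    v j = 0 := by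
  classical
  by_contra hvj
  -- Look at the last nonzero coordinate `m` and the two rows ending there.
  set S : Finset (Fin (n + 1)) := Finset.univ.filter (v · ≠ 0)
  have hjS : j ∈ S := by simpa [S] using hvj
  obtain ⟨m, hmS, hmax⟩ := S.exists_max_image id ⟨j, hjS⟩
  have hvm : v m ≠ 0 := by simpa [S] using hmS
  have hvanish : ∀ k, m < k → v k = 0 := fun k hk => by
    by_contra hk'
    exact absurd (hmax k (by simpa [S] using hk')) (not_le.2 hk)
  obtain ⟨i, rfl⟩ := Fin.exists_succ_eq_of_ne_zero
    (ne_of_gt (lt_of_lt_of_le (Fin.pos_iff_ne_zero.2 hj) (hmax j hjS)))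
  have hrow_last := congrFun hv i.succ
  have hrow_prev := congrFun hv i.castSucc
  rw [hU.mulVec_apply_eq_sum_Icc hvanish, Finset.Icc_self, Finset.sum_singleton, hdiag,
    Pi.smul_apply, smul_eq_mul] at hrow_last
  have hη : η = c := (mul_right_cancel₀ hvm hrow_last).symm
  have hpair : Finset.Icc i.castSucc i.succ = {i.castSucc, i.succ} := by
    ext k; simp [Fin.le_def, Fin.ext_iff]; omega
  rw [hU.mulVec_apply_eq_sum_Icc hvanish, hpair,
    Finset.sum_pair (Fin.castSucc_lt_succ (i := i)).ne, hdiag, Pi.smul_apply, smul_eq_mul, hη,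
    add_eq_left] at hrow_prev
  exact mul_ne_zero (hsuper i) hvm hrow_prev

lemma Matrix.kronecker_one_mulVec_apply {R : Type*} [Semiring R] {m n : Type*} [Fintype m]
    [Fintype n] [DecidableEq n] (A : Matrix m m R) (w : m × n → R) (i : m) (k : n) :
    ((A ⊗ₖ (1 : Matrix n n R)) *ᵥ w) (i, k) = (A *ᵥ fun j => w (j, k)) i := by
  simp [Matrix.mulVec, dotProduct, Fintype.sum_prod_type, Matrix.one_apply]

lemma Aone_blockTriangular (q : ℕ) (h : ℝ) : (Aone q h).BlockTriangular id :=
  fun _ _ hji => if_neg (not_le.2 hji)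

lemma Aone_apply_self (q : ℕ) (h : ℝ) (i : Fin (q + 1)) : Aone q h i i = 1 := by
  simp [Aone]

lemma Aone_castSucc_succ (q : ℕ) (h : ℝ) (i : Fin q) : Aone q h i.castSucc i.succ = h := by
  simp [Aone, (Fin.castSucc_lt_succ (i := i)).le]

lemma Amat_eigenvector_eq_zero {q d : ℕ} {h : ℝ} (hh : h ≠ 0) {w : Fin (q + 1) × Fin d → ℝ}
    {η : ℝ} (heig : Amat q d h *ᵥ w = η • w) {j : Fin (q + 1)} (hj : j ≠ 0) (k : Fin d) :
    w (j, k) = 0 := by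
  refine (Aone_blockTriangular q h).eigenvector_eq_zero_of_ne_zero (Aone_apply_self q h)
    (fun i => by rw [Aone_castSucc_succ]; exact hh) (v := fun j => w (j, k)) (η := η) ?_ hj
  funext i
  simpa [Amat, Matrix.kronecker_one_mulVec_apply] using congrFun heig (i, k)

lemma Cmat_mulVec (q d : ℕ) (w : Fin (q + 1) × Fin d → ℝ) :
    Cmat q d *ᵥ w = fun k => w (0, k) := by
  funext k
  simp [Cmat, Matrix.mulVec, dotProduct, Fintype.sum_prod_type, ite_and]

lemma Cdot_mulVec_eq_zero {q d : ℕ} {w : Fin (q + 1) × Fin d → ℝ}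
    (hw : ∀ j, j ≠ 0 → ∀ k, w (j, k) = 0) : Cdot q d *ᵥ w = 0 := by
  funext k
  refine Finset.sum_eq_zero fun p _ => ?_
  by_cases hp : p.1.val = 1 ∧ p.2 = k
  · rw [hw p.1 (fun h0 => by simp [h0] at hp) p.2, mul_zero]
  · simp [Cdot, hp]

theorem iwp_complete_detectability_general
    (q d : ℕ) (h : ℝ) (hh : 0 < h)
    (Λ : Matrix (Fin d) (Fin d) ℝ) (hΛ : IsUnit Λ)
    (w : Fin (q + 1) × Fin d → ℝ) (η : ℝ)
    (heig : (Amat q d h).mulVec w = η • w)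
    (hH : (Cdot q d - Λ * Cmat q d).mulVec w = 0) :
    w = 0 := by
  have hhigher : ∀ j, j ≠ 0 → ∀ k, w (j, k) = 0 :=
    fun _ hj => Amat_eigenvector_eq_zero hh.ne' heig hj
  have hfirst : (fun k => w (0, k)) = 0 := by
    apply Matrix.mulVec_injective_iff_isUnit.2 hΛ
    rw [Matrix.sub_mulVec, ← Matrix.mulVec_mulVec, Cdot_mulVec_eq_zero hhigher, Cmat_mulVec,
      zero_sub, neg_eq_zero] at hH
    rw [hH, Matrix.mulVec_zero]
  funext ⟨j, k⟩
  by_cases hj : j = 0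
  · subst hj; exact congrFun hfirst k
  · exact hhigher j hj k

/-- complete detectability of `[A(h), H]`: let `h > 0`, `Λ` invertible and
`H = Ċ − ΛC`. If `w` satisfies `A(h)w = ηw` for some scalar `η` and `Hw = 0`, then `w = 0`. -/
theorem iwp_complete_detectability
    (q d : ℕ) (hq : 1 ≤ q) (hd : 1 ≤ d) (h : ℝ) (hh : 0 < h)
    (Λ : Matrix (Fin d) (Fin d) ℝ) (hΛ : IsUnit Λ)
    (w : Fin (q + 1) × Fin d → ℝ) (η : ℝ)
    (heig : (Amat q d h).mulVec w = η • w)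
    (hH : (Cdot q d - Λ * Cmat q d).mulVec w = 0) :
    w = 0 :=
  iwp_complete_detectability_general q d h hh Λ hΛ w η heig hH
end

section
/- Complete stabilisability of the pair [A(h), Q^{1/2}(h)]: let h > 0 and let Γ ∈ ℝ^{d×d} be symmetric positive definite. If a vector w ∈ ℝ^{(q+1)d} satisfies wᵀA(h) = ηwᵀ for some scalar η and wᵀQ(h) = 0 (equivalently, wᵀQ^{1/2}(h) = 0), then w = 0. -/
open Matrix
open scoped Kronecker

/-- Entries of the one-dimensional discretised IWP(q) process-noise covariance `Q⁽¹⁾(h)`. -/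
noncomputable def Qone (q : ℕ) (h : ℝ) : Matrix (Fin (q + 1)) (Fin (q + 1)) ℝ :=
  Matrix.of fun i j =>
    h ^ (2 * q + 1 - i.val - j.val) /
      ((2 * q + 1 - i.val - j.val) * Nat.factorial (q - i.val) * Nat.factorial (q - j.val))

/-- The discretised IWP(q) process-noise covariance `Q(h) = Q⁽¹⁾(h) ⊗ Γ`. -/
noncomputable def Qmat (q d : ℕ) (h : ℝ) (Γ : Matrix (Fin d) (Fin d) ℝ) :
    Matrix (Fin (q + 1) × Fin d) (Fin (q + 1) × Fin d) ℝ :=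
  Qone q h ⊗ₖ Γ

/-!
`Q⁽¹⁾(h)` is the Gram matrix in `L²[0, h]` of the monomials `tᵏ / k!`, `k = 0, …, q`, so its
quadratic form is `∫₀ʰ p(t)² dt` for a polynomial `p` whose coefficients are those of `x`
rescaled; this is positive unless `p = 0`, i.e. `x = 0`. Hence `Q(h) = Q⁽¹⁾(h) ⊗ Γ` is positive
definite, in particular invertible, and `wᵀ Q(h) = 0` forces `w = 0`.
-/

open Polynomial
open scoped Nat

theorem dotProduct_mulVec_gram_eq_integral_sq {ι : Type*} [Fintype ι] (f : ι → ℝ → ℝ)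
    (hf : ∀ i, Continuous (f i)) (a b : ℝ) (x : ι → ℝ) :
    x ⬝ᵥ (of fun i j => ∫ t in a..b, f i t * f j t) *ᵥ x
      = ∫ t in a..b, (∑ i, x i * f i t) ^ 2 := by
  have hcont : ∀ i j, Continuous fun t => x i * f i t * (x j * f j t) := fun i j => by fun_prop
  simp_rw [sq, Finset.sum_mul_sum]
  rw [intervalIntegral.integral_finsetSum fun i _ =>
    (continuous_finsetSum _ fun j _ => hcont i j).intervalIntegrable a b]
  refine Finset.sum_congr rfl fun i _ => ?_
  rw [intervalIntegral.integral_finsetSum fun j _ => (hcont i j).intervalIntegrable a b,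
    mulVec, dotProduct, Finset.mul_sum]
  refine Finset.sum_congr rfl fun j _ => ?_
  rw [of_apply, ← intervalIntegral.integral_mul_const, ← intervalIntegral.integral_const_mul]
  congr 1 with t
  ring

theorem integral_sq_eval_pos {P : ℝ[X]} (hP : P ≠ 0) {a b : ℝ} (hab : a < b) :
    0 < ∫ t in a..b, P.eval t ^ 2 := by
  obtain ⟨c, hc, hPc⟩ : ∃ c ∈ Set.Ioo a b, ¬ P.IsRoot c :=
    ((Set.Ioo_infinite hab).sdiff (finite_setOfPred_isRoot hP)).nonempty
  refine intervalIntegral.integral_pos hab (by fun_prop) (fun t _ => sq_nonneg _)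
    ⟨c, Set.Ioo_subset_Icc_self hc, sq_pos_of_ne_zero hPc⟩

theorem coeff_sum_C_mul_X_pow_of_injective {ι : Type*} [Fintype ι] {R : Type*} [Semiring R]
    (c : ι → R) {e : ι → ℕ} (he : e.Injective) (k : ι) :
    (∑ i, C (c i) * X ^ e i).coeff (e k) = c k := by
  rw [finsetSum_coeff, Finset.sum_eq_single k]
  · simp
  · intro i _ hik
    rw [coeff_C_mul_X_pow, if_neg (he.ne hik).symm]
  · simp

theorem Qone_eq_gram (q : ℕ) (h : ℝ) :
    Qone q h = of fun i j : Fin (q + 1) => ∫ t in (0 : ℝ)..h,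
      t ^ (q - i.val) / (q - i.val)! * (t ^ (q - j.val) / (q - j.val)!) := by
  ext i j
  have hexp : 2 * q + 1 - i.val - j.val = (q - i.val) + (q - j.val) + 1 := by omega
  have hden : (2 * q + 1 - i.val - j.val : ℝ) = ((q - i.val + (q - j.val) : ℕ) : ℝ) + 1 := by
    rw [Nat.cast_add, Nat.cast_sub (by omega), Nat.cast_sub (by omega)]
    ring
  simp_rw [of_apply, div_mul_div_comm, ← pow_add]
  rw [intervalIntegral.integral_div, integral_pow, Qone, of_apply, hexp, hden, zero_pow (Nat.succ_ne_zero _), sub_zero]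
  field_simp

theorem Qone_posDef (q : ℕ) {h : ℝ} (hh : 0 < h) : (Qone q h).PosDef := by
  rw [posDef_iff_dotProduct_mulVec, Qone_eq_gram]
  refine ⟨?_, fun x hx => ?_⟩
  · ext i j
    simp [mul_comm]
  set P : ℝ[X] := ∑ i : Fin (q + 1), C (x i / (q - i.val)!) * X ^ (q - i.val)
  have he : Function.Injective fun i : Fin (q + 1) => q - i.val :=
    fun i j hij => Fin.ext (by simp only at hij; omega)
  have hP : P ≠ 0 := by
    obtain ⟨k, hk⟩ := Function.ne_iff.mp hx
    intro hP0
    have hcoeff : P.coeff (q - k.val) = x k / (q - k.val)! :=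
      coeff_sum_C_mul_X_pow_of_injective (fun i => x i / (q - i.val)!) he k
    rw [hP0, coeff_zero] at hcoeff
    exact hk (by simpa [Nat.factorial_ne_zero] using hcoeff.symm)
  rw [star_trivial, dotProduct_mulVec_gram_eq_integral_sq _ (fun i => by fun_prop)]
  refine (integral_sq_eval_pos hP hh).trans_eq (intervalIntegral.integral_congr fun t _ => ?_)
  simp only [P, eval_finsetSum, eval_mul, eval_C, eval_pow, eval_X, div_mul_eq_mul_div, mul_div_assoc]

theorem iwp_complete_stabilisability_general
    (q d : ℕ) (h : ℝ) (hh : 0 < h)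
    (Γ : Matrix (Fin d) (Fin d) ℝ) (hΓ : Γ.PosDef)
    (w : Fin (q + 1) × Fin d → ℝ)
    (hQ : Matrix.vecMul w (Qmat q d h Γ) = 0) :
    w = 0 :=
  vecMul_injective_of_isUnit ((Qone_posDef q hh).kronecker hΓ).isUnit
    (hQ.trans (zero_vecMul _).symm)

/-- complete stabilisability of `[A(h), Q^{1/2}(h)]`: let `h > 0` and
`Γ` symmetric positive definite. If `w` satisfies `wᵀA(h) = ηwᵀ` for some scalar `η` and
`wᵀQ(h) = 0` (equivalently `wᵀQ^{1/2}(h) = 0`), then `w = 0`. -/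
theorem iwp_complete_stabilisability
    (q d : ℕ) (hq : 1 ≤ q) (hd : 1 ≤ d) (h : ℝ) (hh : 0 < h)
    (Γ : Matrix (Fin d) (Fin d) ℝ) (hΓsymm : Γ.IsSymm) (hΓ : Γ.PosDef)
    (w : Fin (q + 1) × Fin d → ℝ) (η : ℝ)
    (heig : Matrix.vecMul w (Amat q d h) = η • w)
    (hQ : Matrix.vecMul w (Qmat q d h Γ) = 0) :
    w = 0 :=
  iwp_complete_stabilisability_general q d h hh Γ hΓ w hQ
end

section
/- Quadrature filters reduce to the exact Kalman filter for affine vector fields (Lemma 1, quadrature part): let f(y,t) = Λ(t)y + ζ(t) be affine and H = Ċ − Λ(t)C. Let {x_j}_{j=1}^J ⊂ ℝ^{(q+1)d} and weights {w_j}_{j=1}^J ⊂ ℝ form a quadrature rule that integrates polynomials correctly up to second order with respect to a distribution with mean μ^P and covariance Σ^P, i.e. Σ_j w_j = 1, Σ_j w_j x_j = μ^P, and Σ_j w_j (x_j − μ^P)(x_j − μ^P)ᵀ = Σ^P. Then, for the measurement function Z(x) = Ċx − f(Cx,t) = Hx − ζ(t), the quadrature approximations of the update moments are exact: Σ_j w_j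 Z(x_j) = Hμ^P − ζ(t), Σ_j w_j (Z(x_j) − Hμ^P + ζ(t))(Z(x_j) − Hμ^P + ζ(t))ᵀ = HΣ^PHᵀ, and Σ_j w_j (x_j − μ^P)(Z(x_j) − Hμ^P + ζ(t))ᵀ = Σ^PHᵀ; consequently the quadrature-based Gaussian filter update coincides with the exact Kalman update. -/
open Matrix
open scoped BigOperators

/-- `H = Ċ − ΛC`. -/
def Hmat (q d : ℕ) (Λ : Matrix (Fin d) (Fin d) ℝ) :
    Matrix (Fin d) (Fin (q + 1) × Fin d) ℝ :=
  Cdot q d - Λ * Cmat q d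

/-- The affine measurement function `Z(x) = Ċx − f(Cx,t) = Ċx − (Λ(Cx) + ζ) = Hx − ζ`. -/
noncomputable def Zfun (q d : ℕ) (Λ : Matrix (Fin d) (Fin d) ℝ) (ζ : Fin d → ℝ)
    (x : Fin (q + 1) × Fin d → ℝ) : Fin d → ℝ :=
  (Cdot q d).mulVec x - (Λ.mulVec ((Cmat q d).mulVec x) + ζ)

/- The update moments are first and second moments of the affine image `x ↦ Hx - ζ` of the
nodes; weighted sums commute with affine maps once the weights sum to one, and a linear map
`H` acts on outer products as `H (u vᵀ) Hᵀ`, so second-order exactness of the rule is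
inherited by the image. -/

section AffineMoments

variable {ι m n p R : Type*} [Fintype ι] [Fintype m] [CommRing R]

theorem vecMulVec_mulVec_right (u : n → R) (B : Matrix p m R) (v : m → R) :
    vecMulVec u (B *ᵥ v) = vecMulVec u v * Bᵀ := by
  rw [vecMulVec_mul, vecMul_transpose]

theorem vecMulVec_mulVec_mulVec (A : Matrix n m R) (B : Matrix p m R) (u v : m → R) :
    vecMulVec (A *ᵥ u) (B *ᵥ v) = A * vecMulVec u v * Bᵀ := by
  rw [vecMulVec_mulVec_right, mul_vecMulVec]

variable (w : ι → R)

theorem sum_smul_mulVec_sub (hw : ∑ j, w j = 1) (A : Matrix n m R) (b : n → R)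
    (x : ι → m → R) :
    ∑ j, w j • (A *ᵥ x j - b) = A *ᵥ ∑ j, w j • x j - b := by
  simp only [smul_sub, Finset.sum_sub_distrib, ← Finset.sum_smul, hw, one_smul, mulVec_sum,
    mulVec_smul]

theorem sum_smul_vecMulVec_mulVec_right (B : Matrix p m R) (u : ι → n → R) (v : ι → m → R) :
    ∑ j, w j • vecMulVec (u j) (B *ᵥ v j) = (∑ j, w j • vecMulVec (u j) (v j)) * Bᵀ := by
  simp only [vecMulVec_mulVec_right, Matrix.sum_mul, Matrix.smul_mul]

theorem sum_smul_vecMulVec_mulVec_mulVec (A : Matrix n m R) (B : Matrix p m R)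
    (u v : ι → m → R) :
    ∑ j, w j • vecMulVec (A *ᵥ u j) (B *ᵥ v j) =
      A * (∑ j, w j • vecMulVec (u j) (v j)) * Bᵀ := by
  simp only [vecMulVec_mulVec_mulVec, Matrix.mul_sum, Matrix.sum_mul, Matrix.mul_smul,
    Matrix.smul_mul]

end AffineMoments

theorem Zfun_eq (q d : ℕ) (Λ : Matrix (Fin d) (Fin d) ℝ) (ζ : Fin d → ℝ)
    (x : Fin (q + 1) × Fin d → ℝ) :
    Zfun q d Λ ζ x = Hmat q d Λ *ᵥ x - ζ := by
  rw [Zfun, Hmat, sub_mulVec, mulVec_mulVec]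
  abel

theorem quadrature_update_exact_affine_general
    (q d J : ℕ)
    (Λ : Matrix (Fin d) (Fin d) ℝ) (ζ : Fin d → ℝ)
    (μP : Fin (q + 1) × Fin d → ℝ)
    (SigmaP : Matrix (Fin (q + 1) × Fin d) (Fin (q + 1) × Fin d) ℝ)
    (x : Fin J → (Fin (q + 1) × Fin d → ℝ)) (w : Fin J → ℝ)
    (hw1 : ∑ j, w j = 1)
    (hmean : ∑ j, w j • x j = μP)
    (hcov : ∑ j, w j • Matrix.vecMulVec (x j - μP) (x j - μP) = SigmaP) :
    (∑ j, w j • Zfun q d Λ ζ (x j) = (Hmat q d Λ).mulVec μP - ζ) ∧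
      (∑ j, w j • Matrix.vecMulVec
          (Zfun q d Λ ζ (x j) - ((Hmat q d Λ).mulVec μP - ζ))
          (Zfun q d Λ ζ (x j) - ((Hmat q d Λ).mulVec μP - ζ)) =
        Hmat q d Λ * SigmaP * (Hmat q d Λ)ᵀ) ∧
      (∑ j, w j • Matrix.vecMulVec
          (x j - μP)
          (Zfun q d Λ ζ (x j) - ((Hmat q d Λ).mulVec μP - ζ)) =
        SigmaP * (Hmat q d Λ)ᵀ) := by
  simp_rw [Zfun_eq, sub_sub_sub_cancel_right, ← mulVec_sub]
  refine ⟨?_, ?_, ?_⟩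
  · rw [sum_smul_mulVec_sub w hw1, hmean]
  · rw [sum_smul_vecMulVec_mulVec_mulVec, hcov]
  · rw [sum_smul_vecMulVec_mulVec_right, hcov]

/-- Lemma 1 of the paper, quadrature part: let `f(y,t) = Λ(t)y + ζ(t)` be
affine and `H = Ċ − Λ(t)C`.  If the quadrature rule `{(x_j, w_j)}_{j=1}^J` integrates
polynomials correctly up to second order with respect to a distribution with mean `μᴾ` and
covariance `Σᴾ` (weights sum to one, weighted nodes reproduce the mean, weighted centred
outer products reproduce the covariance), then the quadrature approximations of the
Gaussian-filter update moments for the measurement function `Z(x) = Ċx − f(Cx,t) = Hx − ζ`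
are exact: the weighted mean of `Z` is `Hμᴾ − ζ`, the weighted centred outer products of
`Z` give `HΣᴾHᵀ`, and the weighted centred cross outer products give `ΣᴾHᵀ`; consequently
the quadrature-based Gaussian filter update coincides with the exact Kalman update. -/
theorem quadrature_update_exact_affine
    (q d J : ℕ) (hq : 1 ≤ q) (hd : 1 ≤ d)
    (Λ : Matrix (Fin d) (Fin d) ℝ) (ζ : Fin d → ℝ)
    (μP : Fin (q + 1) × Fin d → ℝ)
    (SigmaP : Matrix (Fin (q + 1) × Fin d) (Fin (q + 1) × Fin d) ℝ)
    (x : Fin J → (Fin (q + 1) × Fin d → ℝ)) (w : Fin J → ℝ)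
    (hw1 : ∑ j, w j = 1)
    (hmean : ∑ j, w j • x j = μP)
    (hcov : ∑ j, w j • Matrix.vecMulVec (x j - μP) (x j - μP) = SigmaP) :
    (∑ j, w j • Zfun q d Λ ζ (x j) = (Hmat q d Λ).mulVec μP - ζ) ∧
      (∑ j, w j • Matrix.vecMulVec
          (Zfun q d Λ ζ (x j) - ((Hmat q d Λ).mulVec μP - ζ))
          (Zfun q d Λ ζ (x j) - ((Hmat q d Λ).mulVec μP - ζ)) =
        Hmat q d Λ * SigmaP * (Hmat q d Λ)ᵀ) ∧
      (∑ j, w j • Matrix.vecMulVec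
          (x j - μP)
          (Zfun q d Λ ζ (x j) - ((Hmat q d Λ).mulVec μP - ζ)) =
        SigmaP * (Hmat q d Λ)ᵀ) :=
  quadrature_update_exact_affine_general q d J Λ ζ μP SigmaP x w hw1 hmean hcov
end

section
/- Scaling property of the Kalman filter for affine vector fields (Proposition 4, first part): let f(y,t) = Λ(t)y + ζ(t), σ > 0, R = 0, and let H_n = Ċ − Λ(t_n)C. Consider two Kalman filter recursions started from the same initial mean μ₀^F: one with parameters (μ₀^F, Σ₀ = σ²Σ̆₀, A(h), ξ(h), Q(h) = σ²Q̆(h)), producing (μ_n^P, Σ_n^P, S_n, K_n, ẑ_n, μ_n^F, Σ_n^F), and one with parameters (μ₀^F, Σ̆₀, A(h), ξ(h), Q̆(h)), producing (μ̆_n^P, Σ̆_n^P, S̆_n, K̆_n, z̆_n, μ̆_n^F, Σ̆_n^F), where in both recursions μ_{n+1}^P = A(h)μ_n^F + ξ(h), Σ_{n+1}^P = A(h)Σ_n^F A(h)ᵀ + (process-noise covariance), S_{n+1} = H_{n+1}Σ_{n+1}^P H_{n+1}ᵀ, K_{n+1} = Σ_{n+1}^P H_{n+1}ᵀ S_{n+1}^{−1},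 ẑ_{n+1} = H_{n+1}μ_{n+1}^P − ζ(t_{n+1}), μ_{n+1}^F = μ_{n+1}^P + K_{n+1}(ζ(t_{n+1}) − H_{n+1}μ_{n+1}^P), Σ_{n+1}^F = Σ_{n+1}^P − K_{n+1}S_{n+1}K_{n+1}ᵀ, and each S̆_n is invertible. Then for all n ≥ 0: μ_n^P = μ̆_n^P, μ_n^F = μ̆_n^F, Σ_n^P = σ²Σ̆_n^P, Σ_n^F = σ²Σ̆_n^F, K_n = K̆_n, ẑ_n = z̆_n, and S_n = σ²S̆_n. -/
/-! One induction on `n` carries `μₙᶠ = μ̆ₙᶠ`, `Σₙᶠ = σ²Σ̆ₙᶠ` through a filter step. The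
prediction scales the covariance by `σ²` (the process noise is scaled too), hence `Sₙ = σ²S̆ₙ`,
and the gain `Σₙᴾ Hₙᵀ Sₙ⁻¹` is invariant under this common scaling; with equal gains the mean
updates coincide. -/

open Matrix

namespace Matrix

variable {n : Type*} [Fintype n] [DecidableEq n]

/-- Over a field `c • A` is singular exactly when `c = 0` or `A` is, and then both sides
are `0`. -/
theorem inv_smul₀ {K : Type*} [Field K] (c : K) (A : Matrix n n K) : (c • A)⁻¹ = c⁻¹ • A⁻¹ := by
  rcases eq_or_ne c 0 with rfl | hc
  · simp
  by_cases hA : IsUnit A.det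
  · exact inv_eq_left_inv <| by
      rw [smul_mul_smul_comm, inv_mul_cancel₀ hc, nonsing_inv_mul _ hA, one_smul]
  · have hcA : ¬IsUnit (c • A).det := by
      rwa [det_smul, IsUnit.mul_iff, not_and, imp_iff_not_or, or_iff_right]
      exact not_not.mpr ((Ne.isUnit hc).pow _)
    rw [nonsing_inv_apply_not_isUnit _ hA, nonsing_inv_apply_not_isUnit _ hcA, smul_zero]

theorem smul_mul_mul_inv_smul {m K : Type*} [Fintype m] [Field K] {c : K} (hc : c ≠ 0)
    (P : Matrix m m K) (B : Matrix m n K) (S : Matrix n n K) :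
    c • P * B * (c • S)⁻¹ = P * B * S⁻¹ := by
  rw [inv_smul₀, Matrix.mul_smul, Matrix.smul_mul, Matrix.smul_mul, smul_smul,
    inv_mul_cancel₀ hc, one_smul]

end Matrix

theorem kalman_filter_scaling_affine_general
    (q d : ℕ) (σ : ℝ) (hσ : 0 < σ)
    -- model parameters
    (A : Matrix (Fin (q + 1) × Fin d) (Fin (q + 1) × Fin d) ℝ)
    (ξ : Fin (q + 1) × Fin d → ℝ)
    (Qb Sigma0b : Matrix (Fin (q + 1) × Fin d) (Fin (q + 1) × Fin d) ℝ)
    (Λ : ℕ → Matrix (Fin d) (Fin d) ℝ) (ζ : ℕ → (Fin d → ℝ))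
    -- the scaled filter
    (μP μF : ℕ → (Fin (q + 1) × Fin d → ℝ))
    (SigmaP SigmaF : ℕ → Matrix (Fin (q + 1) × Fin d) (Fin (q + 1) × Fin d) ℝ)
    (S : ℕ → Matrix (Fin d) (Fin d) ℝ)
    (K : ℕ → Matrix (Fin (q + 1) × Fin d) (Fin d) ℝ)
    (zhat : ℕ → (Fin d → ℝ))
    -- the unscaled filter
    (μPb μFb : ℕ → (Fin (q + 1) × Fin d → ℝ))
    (SigmaPb SigmaFb : ℕ → Matrix (Fin (q + 1) × Fin d) (Fin (q + 1) × Fin d) ℝ)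
    (Sb : ℕ → Matrix (Fin d) (Fin d) ℝ)
    (Kb : ℕ → Matrix (Fin (q + 1) × Fin d) (Fin d) ℝ)
    (zb : ℕ → (Fin d → ℝ))
    -- common initial mean, scaled/unscaled initial covariances
    (hμ0 : μF 0 = μFb 0)
    (hSigmaF0 : SigmaF 0 = σ ^ 2 • Sigma0b) (hSigmaFb0 : SigmaFb 0 = Sigma0b)
    -- recursion of the scaled filter (process noise `σ²Q̆(h)`)
    (hμP : ∀ n, μP (n + 1) = A.mulVec (μF n) + ξ)
    (hSigmaP : ∀ n, SigmaP (n + 1) = A * SigmaF n * Aᵀ + σ ^ 2 • Qb)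
    (hS : ∀ n, S (n + 1) =
      (Cdot q d - Λ (n + 1) * Cmat q d) * SigmaP (n + 1) *
        (Cdot q d - Λ (n + 1) * Cmat q d)ᵀ)
    (hK : ∀ n, K (n + 1) =
      SigmaP (n + 1) * (Cdot q d - Λ (n + 1) * Cmat q d)ᵀ * (S (n + 1))⁻¹)
    (hzhat : ∀ n, zhat (n + 1) =
      (Cdot q d - Λ (n + 1) * Cmat q d).mulVec (μP (n + 1)) - ζ (n + 1))
    (hμF : ∀ n, μF (n + 1) = μP (n + 1) +
      (K (n + 1)).mulVec (ζ (n + 1) -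
        (Cdot q d - Λ (n + 1) * Cmat q d).mulVec (μP (n + 1))))
    (hSigmaF : ∀ n, SigmaF (n + 1) = SigmaP (n + 1) - K (n + 1) * S (n + 1) * (K (n + 1))ᵀ)
    -- recursion of the unscaled filter (process noise `Q̆(h)`)
    (hμPb : ∀ n, μPb (n + 1) = A.mulVec (μFb n) + ξ)
    (hSigmaPb : ∀ n, SigmaPb (n + 1) = A * SigmaFb n * Aᵀ + Qb)
    (hSb : ∀ n, Sb (n + 1) =
      (Cdot q d - Λ (n + 1) * Cmat q d) * SigmaPb (n + 1) *
        (Cdot q d - Λ (n + 1) * Cmat q d)ᵀ)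
    (hKb : ∀ n, Kb (n + 1) =
      SigmaPb (n + 1) * (Cdot q d - Λ (n + 1) * Cmat q d)ᵀ * (Sb (n + 1))⁻¹)
    (hzb : ∀ n, zb (n + 1) =
      (Cdot q d - Λ (n + 1) * Cmat q d).mulVec (μPb (n + 1)) - ζ (n + 1))
    (hμFb : ∀ n, μFb (n + 1) = μPb (n + 1) +
      (Kb (n + 1)).mulVec (ζ (n + 1) -
        (Cdot q d - Λ (n + 1) * Cmat q d).mulVec (μPb (n + 1))))
    (hSigmaFb : ∀ n, SigmaFb (n + 1) =
      SigmaPb (n + 1) - Kb (n + 1) * Sb (n + 1) * (Kb (n + 1))ᵀ) :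
    (∀ n, μF n = μFb n) ∧ (∀ n, SigmaF n = σ ^ 2 • SigmaFb n) ∧
      (∀ n, μP (n + 1) = μPb (n + 1)) ∧
      (∀ n, SigmaP (n + 1) = σ ^ 2 • SigmaPb (n + 1)) ∧
      (∀ n, S (n + 1) = σ ^ 2 • Sb (n + 1)) ∧
      (∀ n, K (n + 1) = Kb (n + 1)) ∧
      (∀ n, zhat (n + 1) = zb (n + 1)) := by
  have hσ2 : σ ^ 2 ≠ 0 := by positivity
  have predicted : ∀ n, μF n = μFb n → SigmaF n = σ ^ 2 • SigmaFb n →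
      μP (n + 1) = μPb (n + 1) ∧ SigmaP (n + 1) = σ ^ 2 • SigmaPb (n + 1) ∧
        S (n + 1) = σ ^ 2 • Sb (n + 1) ∧ K (n + 1) = Kb (n + 1) := by
    intro n hμ hCov
    have hCovP : SigmaP (n + 1) = σ ^ 2 • SigmaPb (n + 1) := by
      rw [hSigmaP, hSigmaPb, hCov, Matrix.mul_smul, Matrix.smul_mul, smul_add]
    have hS' : S (n + 1) = σ ^ 2 • Sb (n + 1) := by
      rw [hS, hSb, hCovP, Matrix.mul_smul, Matrix.smul_mul]
    refine ⟨by rw [hμP, hμPb, hμ], hCovP, hS', ?_⟩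
    rw [hK, hKb, hCovP, hS', smul_mul_mul_inv_smul hσ2]
  have filtered : ∀ n, μF n = μFb n ∧ SigmaF n = σ ^ 2 • SigmaFb n := by
    intro n
    induction n with
    | zero => exact ⟨hμ0, by rw [hSigmaF0, hSigmaFb0]⟩
    | succ n ih =>
      obtain ⟨hμP', hCovP, hS', hK'⟩ := predicted n ih.1 ih.2
      refine ⟨by rw [hμF, hμFb, hμP', hK'], ?_⟩
      rw [hSigmaF, hSigmaFb, hCovP, hS', hK', Matrix.mul_smul, Matrix.smul_mul, smul_sub]
  have step n := predicted n (filtered n).1 (filtered n).2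
  refine ⟨fun n => (filtered n).1, fun n => (filtered n).2, fun n => (step n).1,
    fun n => (step n).2.1, fun n => (step n).2.2.1, fun n => (step n).2.2.2, fun n => ?_⟩
  rw [hzhat, hzb, (step n).1]

/-- Proposition 4 of the paper, first part: for the affine vector field
`f(y,t) = Λ(t)y + ζ(t)`, measurements `zₙ = 0`, `R = 0`, `Hₙ = Ċ − Λ(tₙ)C`, and `σ > 0`,
the Kalman filter run with parameters `(μ₀ᶠ, σ²Σ̆₀, A(h), ξ(h), σ²Q̆(h))` and the Kalman
filter run with parameters `(μ₀ᶠ, Σ̆₀, A(h), ξ(h), Q̆(h))` are related, for all `n`, by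
`μₙᴾ = μ̆ₙᴾ`, `μₙᶠ = μ̆ₙᶠ`, `Σₙᴾ = σ²Σ̆ₙᴾ`, `Σₙᶠ = σ²Σ̆ₙᶠ`, `Kₙ = K̆ₙ`, `ẑₙ = z̆ₙ` and
`Sₙ = σ²S̆ₙ` (the predictive quantities being defined for `n ≥ 1`). -/
theorem kalman_filter_scaling_affine
    (q d : ℕ) (hq : 1 ≤ q) (hd : 1 ≤ d) (σ : ℝ) (hσ : 0 < σ)
    -- model parameters
    (A : Matrix (Fin (q + 1) × Fin d) (Fin (q + 1) × Fin d) ℝ)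
    (ξ : Fin (q + 1) × Fin d → ℝ)
    (Qb Sigma0b : Matrix (Fin (q + 1) × Fin d) (Fin (q + 1) × Fin d) ℝ)
    (hQb : Qb.PosSemidef) (hSigma0b : Sigma0b.PosSemidef)
    (Λ : ℕ → Matrix (Fin d) (Fin d) ℝ) (ζ : ℕ → (Fin d → ℝ))
    -- the scaled filter
    (μP μF : ℕ → (Fin (q + 1) × Fin d → ℝ))
    (SigmaP SigmaF : ℕ → Matrix (Fin (q + 1) × Fin d) (Fin (q + 1) × Fin d) ℝ)
    (S : ℕ → Matrix (Fin d) (Fin d) ℝ)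
    (K : ℕ → Matrix (Fin (q + 1) × Fin d) (Fin d) ℝ)
    (zhat : ℕ → (Fin d → ℝ))
    -- the unscaled filter
    (μPb μFb : ℕ → (Fin (q + 1) × Fin d → ℝ))
    (SigmaPb SigmaFb : ℕ → Matrix (Fin (q + 1) × Fin d) (Fin (q + 1) × Fin d) ℝ)
    (Sb : ℕ → Matrix (Fin d) (Fin d) ℝ)
    (Kb : ℕ → Matrix (Fin (q + 1) × Fin d) (Fin d) ℝ)
    (zb : ℕ → (Fin d → ℝ))
    -- common initial mean, scaled/unscaled initial covariances
    (hμ0 : μF 0 = μFb 0)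
    (hSigmaF0 : SigmaF 0 = σ ^ 2 • Sigma0b) (hSigmaFb0 : SigmaFb 0 = Sigma0b)
    -- recursion of the scaled filter (process noise `σ²Q̆(h)`)
    (hμP : ∀ n, μP (n + 1) = A.mulVec (μF n) + ξ)
    (hSigmaP : ∀ n, SigmaP (n + 1) = A * SigmaF n * Aᵀ + σ ^ 2 • Qb)
    (hS : ∀ n, S (n + 1) =
      (Cdot q d - Λ (n + 1) * Cmat q d) * SigmaP (n + 1) *
        (Cdot q d - Λ (n + 1) * Cmat q d)ᵀ)
    (hK : ∀ n, K (n + 1) =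
      SigmaP (n + 1) * (Cdot q d - Λ (n + 1) * Cmat q d)ᵀ * (S (n + 1))⁻¹)
    (hzhat : ∀ n, zhat (n + 1) =
      (Cdot q d - Λ (n + 1) * Cmat q d).mulVec (μP (n + 1)) - ζ (n + 1))
    (hμF : ∀ n, μF (n + 1) = μP (n + 1) +
      (K (n + 1)).mulVec (ζ (n + 1) -
        (Cdot q d - Λ (n + 1) * Cmat q d).mulVec (μP (n + 1))))
    (hSigmaF : ∀ n, SigmaF (n + 1) = SigmaP (n + 1) - K (n + 1) * S (n + 1) * (K (n + 1))ᵀ)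
    -- recursion of the unscaled filter (process noise `Q̆(h)`)
    (hμPb : ∀ n, μPb (n + 1) = A.mulVec (μFb n) + ξ)
    (hSigmaPb : ∀ n, SigmaPb (n + 1) = A * SigmaFb n * Aᵀ + Qb)
    (hSb : ∀ n, Sb (n + 1) =
      (Cdot q d - Λ (n + 1) * Cmat q d) * SigmaPb (n + 1) *
        (Cdot q d - Λ (n + 1) * Cmat q d)ᵀ)
    (hKb : ∀ n, Kb (n + 1) =
      SigmaPb (n + 1) * (Cdot q d - Λ (n + 1) * Cmat q d)ᵀ * (Sb (n + 1))⁻¹)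
    (hzb : ∀ n, zb (n + 1) =
      (Cdot q d - Λ (n + 1) * Cmat q d).mulVec (μPb (n + 1)) - ζ (n + 1))
    (hμFb : ∀ n, μFb (n + 1) = μPb (n + 1) +
      (Kb (n + 1)).mulVec (ζ (n + 1) -
        (Cdot q d - Λ (n + 1) * Cmat q d).mulVec (μPb (n + 1))))
    (hSigmaFb : ∀ n, SigmaFb (n + 1) =
      SigmaPb (n + 1) - Kb (n + 1) * Sb (n + 1) * (Kb (n + 1))ᵀ)
    -- each unscaled innovation covariance is invertible
    (hSbinv : ∀ n, IsUnit (Sb (n + 1))) :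
    (∀ n, μF n = μFb n) ∧ (∀ n, SigmaF n = σ ^ 2 • SigmaFb n) ∧
      (∀ n, μP (n + 1) = μPb (n + 1)) ∧
      (∀ n, SigmaP (n + 1) = σ ^ 2 • SigmaPb (n + 1)) ∧
      (∀ n, S (n + 1) = σ ^ 2 • Sb (n + 1)) ∧
      (∀ n, K (n + 1) = Kb (n + 1)) ∧
      (∀ n, zhat (n + 1) = zb (n + 1)) :=
  kalman_filter_scaling_affine_general q d σ hσ A ξ Qb Sigma0b Λ ζ μP μF SigmaP SigmaF S K zhat μPb
    μFb SigmaPb SigmaFb Sb Kb zb hμ0 hSigmaF0 hSigmaFb0 hμP hSigmaP hS hK hzhat hμF hSigmaF hμPb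
    hSigmaPb hSb hKb hzb hμFb hSigmaFb
end
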